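/- Let X ⊂ P^N be a projective variety, p = [1:0:⋯:0] ∈ X, d = d_p(X), and let f = Σ_{i=1}^{d} x_0^{d−i} f^i ∈ H^0(P^N, I_X ⊗ O_{P^N}(d)) with f^i ∈ ℂ[x_1, …, x_N] homogeneous of degree i. For 1 ≤ i ≤ d−1, let D^i ⊂ P^N be the hypersurface defined by x_0^{i−1} f^1 + ⋯ + x_0 f^{i−1} + f^i, and suppose D^i does not contain X, so that D^i|_X is an effective divisor in |O_X(i)|. Then ord_p(D^i|_X) ≥ i + 1. -/

import Mathlib

/-!
Common framework: classical projective geometry over ℂ, with projective space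
`ℙ^{n-1} = Pr n` realized as the projectivization of `ℂ^n`, algebraic subsets as
zero loci of homogeneous polynomials, lines/linear subspaces via linear subspaces,
degree and multiplicity of curves via hyperplane counting, the Seshadri constant
of `O_X(1)` at a point via the curve-infimum formula, and the invariant `d_p(X)`
via local generation of the ideal sheaf by forms of a given degree.
-/

open scoped Classical
open Function Set

noncomputable section

namespace PaperSC

/-- Projective space of lines in `ℂ^n`; `Pr (N+1)` is the usual `ℙ^N` over `ℂ`. -/
abbrev Pr (n : ℕ) := Projectivization ℂ (Fin n → ℂ)

/-- Polynomial ring in `n` variables over `ℂ` (homogeneous coordinates). -/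
abbrev Poly (n : ℕ) := MvPolynomial (Fin n) ℂ

variable {n : ℕ}

/-- A (homogeneous) polynomial vanishes at a projective point. -/
def VanishAt (f : Poly n) (x : Pr n) : Prop :=
  ∀ (v : Fin n → ℂ) (hv : v ≠ 0), Projectivization.mk ℂ v hv = x → MvPolynomial.eval v f = 0

/-- Common zero locus in projective space of a set of polynomials. -/
def zeroLocus (S : Set (Poly n)) : Set (Pr n) := {x | ∀ f ∈ S, VanishAt f x}

/-- The polynomial is homogeneous (of some degree). -/
def IsHomog (f : Poly n) : Prop := ∃ d, f.IsHomogeneous d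

/-- Zariski-closed algebraic subsets of projective space. -/
def IsAlgSet (X : Set (Pr n)) : Prop :=
  ∃ S : Set (Poly n), (∀ f ∈ S, IsHomog f) ∧ X = zeroLocus S

/-- A projective subvariety: a nonempty irreducible Zariski-closed subset. -/
def IsSubvariety (X : Set (Pr n)) : Prop :=
  IsAlgSet X ∧ X.Nonempty ∧
    ∀ A B : Set (Pr n), IsAlgSet A → IsAlgSet B → X ⊆ A ∪ B → X ⊆ A ∨ X ⊆ B

/-- Dimension of a subset of projective space: the supremum of the lengths of strict
chains of subvarieties contained in it. -/
def dim (X : Set (Pr n)) : ℕ :=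
  sSup {k | ∃ Z : Fin (k + 1) → Set (Pr n),
    (∀ i, IsSubvariety (Z i) ∧ Z i ⊆ X) ∧ StrictMono Z}

/-- A linear subvariety of projective space, given by a linear subspace of the
indicated (linear-algebra) rank. -/
def IsLinearOfRank (r : ℕ) (L : Set (Pr n)) : Prop :=
  ∃ W : Submodule ℂ (Fin n → ℂ), Module.finrank ℂ W = r ∧
    L = {x : Pr n | x.submodule ≤ W}

/-- A line in projective space (projective curve of degree 1). -/
def IsLine (L : Set (Pr n)) : Prop := IsLinearOfRank 2 L

/-- A hyperplane in `Pr n = ℙ^{n-1}`. -/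
def IsHyperplane (H : Set (Pr n)) : Prop := IsLinearOfRank (n - 1) H

/-- A projective curve: a subvariety of dimension 1. -/
def IsCurve (C : Set (Pr n)) : Prop := IsSubvariety C ∧ dim C = 1

/-- Degree of a (reduced irreducible) curve in projective space: the maximal number of
points in which a hyperplane not containing it meets it. -/
def degCurve (C : Set (Pr n)) : ℕ :=
  sSup {k | ∃ H, IsHyperplane H ∧ ¬ C ⊆ H ∧ k = (C ∩ H).ncard}

/-- Multiplicity of a curve at a point `p`: `deg C` minus the maximal number of points
away from `p` in which a hyperplane through `p` (not containing `C`) meets `C`. -/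
def multAt (C : Set (Pr n)) (p : Pr n) : ℕ :=
  degCurve C -
    sSup {k | ∃ H, IsHyperplane H ∧ p ∈ H ∧ ¬ C ⊆ H ∧ k = ((C ∩ H) \ {p}).ncard}

/-- The Seshadri constant `ε(X, O_X(1); p)`: the infimum of `deg C / mult_p C` over
reduced irreducible curves `C ⊆ X` through `p`. -/
def seshadri (X : Set (Pr n)) (p : Pr n) : ℝ :=
  sInf {r : ℝ | ∃ C : Set (Pr n), IsCurve C ∧ C ⊆ X ∧ p ∈ C ∧
    r = (degCurve C : ℝ) / (multAt C p : ℝ)}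

/-- `F_p(X)`: the set of lines on `X` passing through `p`. -/
def linesThrough (X : Set (Pr n)) (p : Pr n) : Set (Set (Pr n)) :=
  {L | IsLine L ∧ L ⊆ X ∧ p ∈ L}

/-- The cone `Cone F_p(X)` with vertex `p` over the lines of `X` through `p`. -/
def coneOfLines (X : Set (Pr n)) (p : Pr n) : Set (Pr n) :=
  {p} ∪ ⋃ L ∈ linesThrough X p, L

/-- Degree of a projective variety `X`: the maximal (finite) number of points in which a
linear subvariety of complementary dimension meets `X`. -/
def degVar (X : Set (Pr n)) : ℕ :=
  sSup {k | ∃ L, IsLinearOfRank (n - dim X) L ∧ (X ∩ L).Finite ∧ k = (X ∩ L).ncard}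

/-- Dehomogenization in the affine chart `x_i ≠ 0` (substitute `x_i = 1`). -/
def subst1 (i : Fin n) : Poly n →ₐ[ℂ] Poly n :=
  MvPolynomial.aeval (Function.update MvPolynomial.X i 1)

/-- Affine coordinates of a projective point in the chart `x_i ≠ 0`. -/
def acoord (i : Fin n) (p : Pr n) : Fin n → ℂ := fun j => p.rep j / p.rep i

/-- The maximal ideal of the point with affine coordinates `a`. -/
def mIdeal (a : Fin n → ℂ) : Ideal (Poly n) :=
  Ideal.span (Set.range fun j => MvPolynomial.X j - MvPolynomial.C (a j))

/-- Homogeneous polynomials of degree `d` vanishing on `X`,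
i.e. `H^0(ℙ^{n-1}, I_X ⊗ O(d))`. -/
def homVan (X : Set (Pr n)) (d : ℕ) : Set (Poly n) :=
  {f | f.IsHomogeneous d ∧ ∀ x ∈ X, VanishAt f x}

/-- All homogeneous polynomials vanishing on `X`. -/
def vanPolys (X : Set (Pr n)) : Set (Poly n) := ⋃ d, homVan X d

/-- The homogeneous ideal of `X`. -/
def homIdeal (X : Set (Pr n)) : Ideal (Poly n) := Ideal.span (vanPolys X)

/-- The affine ideal of `X` in the chart `x_i ≠ 0`. -/
def affIdeal (i : Fin n) (X : Set (Pr n)) : Ideal (Poly n) :=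
  Ideal.span (⇑(subst1 i) '' vanPolys X)

/-- `X` is cut out scheme-theoretically at `p` by hypersurfaces of degree `d`:
the stalk at `p` of the ideal sheaf `I_X` is generated by the degree-`d` forms
vanishing on `X`, i.e. the natural map
`H^0(ℙ^N, I_X ⊗ O(d)) ⊗ O → I_X ⊗ O(d)` is surjective at `p`. -/
def CutOutAt (X : Set (Pr n)) (p : Pr n) (d : ℕ) : Prop :=
  ∀ f ∈ vanPolys X, ∃ (i : Fin n) (s : Poly n), p.rep i ≠ 0 ∧
    MvPolynomial.eval (acoord i p) s ≠ 0 ∧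
    s * subst1 i f ∈ Ideal.span (⇑(subst1 i) '' homVan X d)

/-- `d_p(X)`: the least degree `d` such that `X` is cut out at `p` by degree-`d`
hypersurfaces. -/
def dP (X : Set (Pr n)) (p : Pr n) : ℕ := sInf {d | CutOutAt X p d}

/-- `ord_p` of the effective divisor cut on `X` by the homogeneous polynomial `f`:
the largest `m` with the local equation of `f` lying in `m_p^m ⊆ O_{X,p}`. -/
def ordAt (X : Set (Pr n)) (p : Pr n) (f : Poly n) : ℕ :=
  sSup {m | ∃ (i : Fin n) (s : Poly n), p.rep i ≠ 0 ∧
    MvPolynomial.eval (acoord i p) s ≠ 0 ∧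
    s * subst1 i f ∈ mIdeal (acoord i p) ^ m ⊔ affIdeal i X}

/-- Differential of a polynomial at the affine point `a`. -/
def diffAt (a : Fin n → ℂ) (g : Poly n) : (Fin n → ℂ) →ₗ[ℂ] ℂ :=
  ∑ j : Fin n, MvPolynomial.eval a (MvPolynomial.pderiv j g) • LinearMap.proj j

/-- Zariski tangent space of `X` at `p`, computed in the chart `x_i ≠ 0` (it contains the
one extra "dummy" direction of the substituted variable). -/
def tangentAt (X : Set (Pr n)) (i : Fin n) (p : Pr n) : Submodule ℂ (Fin n → ℂ) :=
  ⨅ f ∈ vanPolys X, LinearMap.ker (diffAt (acoord i p) (subst1 i f))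

/-- Smoothness of `X` at `p` (Jacobian criterion). -/
def IsSmoothPt (X : Set (Pr n)) (p : Pr n) : Prop :=
  ∃ i : Fin n, p.rep i ≠ 0 ∧ Module.finrank ℂ ↥(tangentAt X i p) = dim X + 1

/-- A smooth projective set. -/
def IsSmooth (X : Set (Pr n)) : Prop := ∀ p ∈ X, IsSmoothPt X p

/-- `P` holds for a general point of `X`: it holds away from a proper closed subset. -/
def GeneralPt (X : Set (Pr n)) (P : Pr n → Prop) : Prop :=
  ∃ Z : Set (Pr n), IsAlgSet Z ∧ ¬ X ⊆ Z ∧ ∀ p ∈ X \ Z, P p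

/-- The coordinate vector of the point `[1:0:⋯:0]`. -/
def e0vec (n : ℕ) : Fin (n + 1) → ℂ := Fin.cons 1 0

lemma e0vec_ne (n : ℕ) : e0vec n ≠ 0 := by
  intro h
  simpa [e0vec] using congrFun h 0

/-- The point `p = [1:0:⋯:0] ∈ ℙ^n`. -/
def pt0 (n : ℕ) : Pr (n + 1) := Projectivization.mk ℂ (e0vec n) (e0vec_ne n)

/-- The line through `[1:0:⋯:0]` with direction `u ∈ ℙ^{n-1}`; this realizes the
identification `F_p(ℙ^n) ≅ ℙ^{n-1} = Proj ℂ[x_1,…,x_n]`. -/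
def dirLine (u : Pr n) : Set (Pr (n + 1)) :=
  {x | x.submodule ≤ Submodule.span ℂ
    ({Fin.cons 1 0, Fin.cons 0 u.rep} : Set (Fin (n + 1) → ℂ))}

/-- Embedding `ℂ[x_1,…,x_n] → ℂ[x_0,x_1,…,x_n]`. -/
def emb : Poly n →ₐ[ℂ] Poly (n + 1) := MvPolynomial.rename Fin.succ

/-- An effective Cartier divisor on `X ⊆ ℙ^{n-1}`, given by local equations
`num a / den a` (ratios of homogeneous forms of equal degrees) on an open cover of `X`,
whose numerators are local nonzerodivisors and which agree up to units on overlaps. -/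
structure EffCartier (n : ℕ) (X : Set (Pr n)) where
  idx : Type
  U : idx → Set (Pr n)
  isOpen : ∀ a, ∃ Z, IsAlgSet Z ∧ U a = X \ Z
  covers : ∀ x ∈ X, ∃ a, x ∈ U a
  num : idx → Poly n
  den : idx → Poly n
  deg_eq : ∀ a, ∃ d, (num a).IsHomogeneous d ∧ (den a).IsHomogeneous d
  den_ne : ∀ a, ∀ x ∈ U a, ¬ VanishAt (den a) x
  regular : ∀ a, ∀ q ∈ U a, ∀ i : Fin n, q.rep i ≠ 0 →
    ∀ g s : Poly n, MvPolynomial.eval (acoord i q) s ≠ 0 →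
      s * g * subst1 i (num a) ∈ affIdeal i X →
      ∃ t : Poly n, MvPolynomial.eval (acoord i q) t ≠ 0 ∧ t * g ∈ affIdeal i X
  compat : ∀ a b, ∀ q, q ∈ U a → q ∈ U b → ∀ i : Fin n, q.rep i ≠ 0 →
    ∃ s : Poly n, MvPolynomial.eval (acoord i q) s ≠ 0 ∧
      s * subst1 i (num a * den b) ∈
        Ideal.span {subst1 i (num b * den a)} ⊔ affIdeal i X

namespace EffCartier

variable {n : ℕ} {X : Set (Pr n)}

/-- Support of the divisor. -/
def supp (D : EffCartier n X) : Set (Pr n) :=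
  {x | x ∈ X ∧ ∃ a, x ∈ D.U a ∧ VanishAt (D.num a) x}

/-- `ord_p(D)`: the largest `m` such that a local equation of `D` lies in `m_p^m`. -/
def ordAtPt (D : EffCartier n X) (p : Pr n) : ℕ :=
  sSup {m | ∃ a, p ∈ D.U a ∧ ∃ (i : Fin n) (s : Poly n), p.rep i ≠ 0 ∧
    MvPolynomial.eval (acoord i p) s ≠ 0 ∧
    s * subst1 i (D.num a) ∈ mIdeal (acoord i p) ^ m ⊔ affIdeal i X}

/-- Local intersection multiplicity of `D` with the curve `C` at `q`:
`dim_ℂ O_{C,q}/(local equation)`, computed as the stabilized value of the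
finite-dimensional truncations. -/
def locMult (D : EffCartier n X) (C : Set (Pr n)) (q : Pr n) : ℕ :=
  sSup {m | ∃ (a : D.idx) (i : Fin n) (M : ℕ), q ∈ D.U a ∧ q.rep i ≠ 0 ∧
    m = Module.finrank ℂ
      (Poly n ⧸ (Ideal.span {subst1 i (D.num a)} ⊔ affIdeal i C ⊔
        mIdeal (acoord i q) ^ M))}

/-- The intersection number `C · D`: the sum of local intersection multiplicities. -/
def inter (D : EffCartier n X) (C : Set (Pr n)) : ℕ :=
  ∑ᶠ q ∈ C ∩ D.supp, D.locMult C q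

end EffCartier

/-- A conic: a smooth projective curve of degree 2. -/
def IsConic (C : Set (Pr n)) : Prop := IsCurve C ∧ degCurve C = 2 ∧ IsSmooth C

/-- Rows of a matrix-shaped tuple. -/
def row {a b : ℕ} (t : Fin a × Fin b → ℂ) (i : Fin a) : Fin b → ℂ := fun j => t (i, j)

/-- The image of the degree-2 parametrization `[s:u] ↦ s²t₀ + su t₁ + u²t₂`; for linearly
independent `t₀,t₁,t₂` this is exactly a conic, and all conics arise this way. -/
def conicOf (t : Fin 3 × Fin n → ℂ) : Set (Pr n) :=
  {x | ∃ s u : ℂ,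
    ∃ h : (s ^ 2 • row t 0 + (s * u) • row t 1 + u ^ 2 • row t 2) ≠ 0,
      Projectivization.mk ℂ (s ^ 2 • row t 0 + (s * u) • row t 1 + u ^ 2 • row t 2) h = x}

/-- Parameter space of (parametrized) conics on `Y` through `p`. Two parameters give the
same conic exactly along an orbit of the 4-dimensional group `GL₂(ℂ) × scalings`, so
`dim R_p(Y) = affDim (conicParams Y p) - 4`. -/
def conicParams (Y : Set (Pr n)) (p : Pr n) : Set (Fin 3 × Fin n → ℂ) :=
  {t | LinearIndependent ℂ (row t) ∧ conicOf t ⊆ Y ∧ p ∈ conicOf t}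

/-- Affine algebraic subsets of an affine space `ι → ℂ`. -/
def AffAlg {ι : Type} (S : Set (ι → ℂ)) : Prop :=
  ∃ T : Set (MvPolynomial ι ℂ), S = {a | ∀ f ∈ T, MvPolynomial.eval a f = 0}

/-- Affine varieties: nonempty irreducible affine algebraic sets. -/
def AffVariety {ι : Type} (S : Set (ι → ℂ)) : Prop :=
  AffAlg S ∧ S.Nonempty ∧
    ∀ A B : Set (ι → ℂ), AffAlg A → AffAlg B → S ⊆ A ∪ B → S ⊆ A ∨ S ⊆ B

/-- Zariski closure in affine space. -/
def aclosure {ι : Type} (S : Set (ι → ℂ)) : Set (ι → ℂ) :=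
  ⋂₀ {Z | AffAlg Z ∧ S ⊆ Z}

/-- Dimension of a subset of affine space, via chains of subvarieties of its closure. -/
def affDim {ι : Type} (S : Set (ι → ℂ)) : ℕ :=
  sSup {k | ∃ Z : Fin (k + 1) → Set (ι → ℂ),
    (∀ i, AffVariety (Z i) ∧ Z i ⊆ aclosure S) ∧ StrictMono Z}

/-- An irreducible component of (the closure of) `S`. -/
def IsAffComponent {ι : Type} (T S : Set (ι → ℂ)) : Prop :=
  AffVariety T ∧ T ⊆ aclosure S ∧
    ∀ T' : Set (ι → ℂ), AffVariety T' → T' ⊆ aclosure S → T ⊆ T' → T = T'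

/-- `P` holds for a general element of `S ⊆ (ι → ℂ)`. -/
def GeneralAff {ι : Type} (S : Set (ι → ℂ)) (P : (ι → ℂ) → Prop) : Prop :=
  ∃ Z : Set (ι → ℂ), AffAlg Z ∧ ¬ S ⊆ Z ∧ ∀ w ∈ S \ Z, P w

/-- The linear form with coefficient vector `w`. -/
def linForm (w : Fin n → ℂ) : Poly n :=
  ∑ j : Fin n, MvPolynomial.C (w j) * MvPolynomial.X j

/-- The hyperplane with coefficient vector `w`. -/
def hypOf (w : Fin n → ℂ) : Set (Pr n) := zeroLocus {linForm w}

/-- `I_Y ⊗ O(d)` is globally generated: at every point the stalk of the ideal sheaf of `Y`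
is generated by the degree-`d` forms vanishing on `Y`. -/
def SheafGenByDeg (Y : Set (Pr n)) (d : ℕ) : Prop :=
  ∀ q : Pr n, ∀ f ∈ vanPolys Y, ∃ (i : Fin n) (s : Poly n), q.rep i ≠ 0 ∧
    MvPolynomial.eval (acoord i q) s ≠ 0 ∧
    s * subst1 i f ∈ Ideal.span (⇑(subst1 i) '' homVan Y d)

/-- Surjectivity of `H^0(ℙ^N, I_C ⊗ O(1)) ⊗ O_Y → I_{C/Y} ⊗ O_Y(1)`: at every point of
`Y`, the stalk of `I_{C/Y}` is generated by the linear forms vanishing on `C`. -/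
def LinearCutOnY (Y C : Set (Pr n)) : Prop :=
  ∀ q ∈ Y, ∀ f ∈ vanPolys C, ∃ (i : Fin n) (s : Poly n), q.rep i ≠ 0 ∧
    MvPolynomial.eval (acoord i q) s ≠ 0 ∧
    s * subst1 i f ∈ Ideal.span (⇑(subst1 i) '' homVan C 1) ⊔ affIdeal i Y

/-- The projective transformation induced by a linear automorphism. -/
def pmap (g : (Fin n → ℂ) ≃ₗ[ℂ] (Fin n → ℂ)) : Pr n → Pr n :=
  Projectivization.map g.toLinearMap g.injective

/-- `Y` is a homogeneous space: the projective transformations preserving `Y` act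
transitively on `Y`. -/
def IsHomogSpace (Y : Set (Pr n)) : Prop :=
  ∀ p ∈ Y, ∀ q ∈ Y, ∃ g : (Fin n → ℂ) ≃ₗ[ℂ] (Fin n → ℂ),
    pmap g '' Y = Y ∧ pmap g p = q

/-- `Y ⊆ ℙ^N` is a rational homogeneous space of Picard number one, embedded by the ample
generator of its Picard group: a smooth homogeneous subvariety, every prime divisor of
which is (set-theoretically) a hypersurface section (Picard number one), carrying a line
(which forces the embedding to be by the ample generator and rules out abelian factors). -/
def IsRatHomog1 (Y : Set (Pr n)) : Prop :=
  IsSubvariety Y ∧ IsSmooth Y ∧ IsHomogSpace Y ∧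
    (∀ D : Set (Pr n), IsSubvariety D → D ⊆ Y → dim D + 1 = dim Y →
      ∃ g : Poly n, IsHomog g ∧ D = Y ∩ zeroLocus {g}) ∧
    ∃ p ∈ Y, (linesThrough Y p).Nonempty

/-- The Fano index `i(Y)` of a rational homogeneous space `Y` of Picard number one
embedded by the ample generator, characterized geometrically by
`dim F_p(Y) = i(Y) - 2`, i.e. `i(Y) = dim (Cone F_p(Y)) + 1`. -/
def fanoIndex (Y : Set (Pr n)) : ℕ :=
  sSup {k | ∃ p ∈ Y, k = dim (coneOfLines Y p) + 1}

/-- A polynomial function (in the coefficients) on tuples of polynomials. -/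
def IsPolyFun {κ : Type} {m : ℕ} (Φ : (κ → Poly m) → ℂ) : Prop :=
  ∃ F : MvPolynomial ((Fin m →₀ ℕ) × κ) ℂ, ∀ g,
    Φ g = MvPolynomial.eval (fun mc => MvPolynomial.coeff mc.1 (g mc.2)) F

/-- `P` holds for a general tuple of polynomials satisfying the shape condition `Q`:
there is a polynomial function in the coefficients, not identically zero on tuples
satisfying `Q`, whose nonvanishing implies `P`. -/
def GeneralTuple {κ : Type} {m : ℕ} (Q P : (κ → Poly m) → Prop) : Prop :=
  ∃ Φ : (κ → Poly m) → ℂ, IsPolyFun Φ ∧ (∃ g, Q g ∧ Φ g ≠ 0) ∧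
    ∀ g, Q g → Φ g ≠ 0 → P g

/-- The homogeneous coordinate ring of `C`. -/
abbrev CoordRing (C : Set (Pr n)) := Poly n ⧸ homIdeal C

/-- The ring whose graded pieces carry the conormal module `I_C/(I_C² + I_X)` of `C ⊆ X`. -/
abbrev ConormalRing (X C : Set (Pr n)) :=
  Poly n ⧸ (homIdeal C * homIdeal C ⊔ homIdeal X)

/-- Degree-`d` graded piece of the coordinate ring of `C`. -/
def coordGrade (C : Set (Pr n)) (d : ℕ) : Submodule ℂ (CoordRing C) :=
  Submodule.span ℂ (⇑(Ideal.Quotient.mk (homIdeal C)) ''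
    {f : Poly n | f.IsHomogeneous d})

/-- Degree-`d` graded piece of the conormal module `N^∨_{C/X} = I_C/(I_C² + I_X)`. -/
def conormalGrade (X C : Set (Pr n)) (d : ℕ) : Submodule ℂ (ConormalRing X C) :=
  Submodule.span ℂ (⇑(Ideal.Quotient.mk (homIdeal C * homIdeal C ⊔ homIdeal X)) ''
    homVan C d)

/-- The normal bundle `N_{C/X}` is trivial of rank `k` : equivalently its dual, the
conormal sheaf — the sheafification of the graded module `I_C/(I_C²+I_X)` — is isomorphic
to `O_C^k`, i.e. in all large degrees the graded conormal module is isomorphic, as a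
graded module over the coordinate ring of `C` (generated in degree one), to
(the truncation of) the free module `(S_C)^k`. -/
def ConormalTrivial (X C : Set (Pr n)) (k : ℕ) : Prop :=
  ∃ e0 : ℕ,
    ∃ ψ : ∀ d : ℕ, e0 ≤ d → ((Fin k → ↥(coordGrade C d)) ≃ₗ[ℂ] ↥(conormalGrade X C d)),
      ∀ (d : ℕ) (hd : e0 ≤ d) (h : Poly n), h.IsHomogeneous 1 →
        ∀ (x : Fin k → ↥(coordGrade C d)) (y : Fin k → ↥(coordGrade C (d + 1))),
          (∀ j, (y j : CoordRing C) =
            Ideal.Quotient.mk (homIdeal C) h * (x j : CoordRing C)) →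
          ((ψ (d + 1) (hd.trans (Nat.le_succ d)) y : ConormalRing X C) =
            Ideal.Quotient.mk (homIdeal C * homIdeal C ⊔ homIdeal X) h *
              (ψ d hd x : ConormalRing X C))

end PaperSC

/-!
In the chart `x_0 = 1` the local equation of `D^i` is `f^1 + ⋯ + f^i`. It differs from the
local equation `f^1 + ⋯ + f^d` of `f ∈ I_X` by `f^{i+1} + ⋯ + f^d ∈ m_p^{i+1}`, so `i + 1` is
an admissible order. The supremum defining `ord_p` is finite because `X ⊄ D^i`: if for every
`m` some `s` with `s(p) ≠ 0` has `s g ∈ m_p^m + I_X`, Krull's intersection theorem in the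
local ring at `p` gives one with `s g ∈ I_X`. Then `X ⊆ D^i ∪ V(x_0 · s^h)`, where `s^h` is
the homogenization of `s`, and as `X` is irreducible and `p ∉ V(x_0 · s^h)`, `X ⊆ D^i`.
-/
theorem Ideal.exists_notMem_mul_mem_of_forall_mul_mem_pow_sup {R : Type*} [CommRing R]
    [IsNoetherianRing R] {P : Ideal R} [P.IsPrime] {I : Ideal R} {g : R}
    (h : ∀ m : ℕ, ∃ s ∉ P, s * g ∈ P ^ m ⊔ I) : ∃ s ∉ P, s * g ∈ I := by
  let Rₚ := Localization.AtPrime P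
  let K : Ideal Rₚ := I.map (algebraMap R Rₚ)
  let M := Rₚ ⧸ K
  have hmem : ∀ m : ℕ, Ideal.Quotient.mk K (algebraMap R Rₚ g) ∈
      ((IsLocalRing.maximalIdeal Rₚ) ^ m • ⊤ : Submodule Rₚ M) := by
    intro m
    obtain ⟨s, hs, hsg⟩ := h m
    have hunit : IsUnit (algebraMap R Rₚ s) :=
      IsLocalization.map_units Rₚ (⟨s, hs⟩ : P.primeCompl)
    have hsg' := Ideal.mem_map_of_mem (algebraMap R Rₚ) hsg
    rw [Ideal.map_sup, Ideal.map_pow, Localization.AtPrime.map_eq_maximalIdeal, map_mul,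
      Ideal.unit_mul_mem_iff_mem _ hunit] at hsg'
    obtain ⟨y, hy, z, hz, hyz⟩ := Submodule.mem_sup.mp hsg'
    rw [← hyz, map_add, Ideal.Quotient.eq_zero_iff_mem.mpr hz, add_zero,
      ← mul_one (Ideal.Quotient.mk K y), ← Ideal.Quotient.algebraMap_eq, ← Algebra.smul_def]
    exact Submodule.smul_mem_smul hy Submodule.mem_top
  have hzero : Ideal.Quotient.mk K (algebraMap R Rₚ g) = 0 := by
    have := Submodule.mem_iInf _ |>.mpr hmem
    rwa [Ideal.iInf_pow_smul_eq_bot_of_isLocalRing _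
      (IsLocalRing.maximalIdeal.isMaximal Rₚ).ne_top, Submodule.mem_bot] at this
  obtain ⟨s, hs, hsg⟩ :=
    (IsLocalization.algebraMap_mem_map_algebraMap_iff P.primeCompl Rₚ I g).mp
      (Ideal.Quotient.eq_zero_iff_mem.mp hzero)
  exact ⟨s, hs, hsg⟩

namespace MvPolynomial

variable {σ R : Type*} [CommSemiring R]

theorem IsHomogeneous.eval_smul {f : MvPolynomial σ R} {k : ℕ} (hf : f.IsHomogeneous k)
    (c : R) (v : σ → R) : eval (c • v) f = c ^ k * eval v f := by
  rw [eval_eq, eval_eq, Finset.mul_sum]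
  refine Finset.sum_congr rfl fun u hu => ?_
  have hdeg : ∑ j ∈ u.support, u j = k := by
    simpa [Finsupp.weight_apply, Finsupp.sum] using hf (mem_support_iff.mp hu)
  simp only [Pi.smul_apply, smul_eq_mul, mul_pow, Finset.prod_mul_distrib,
    Finset.prod_pow_eq_pow_sum, hdeg]
  ring

noncomputable def homogenizeAt (i : σ) (s : MvPolynomial σ R) : MvPolynomial σ R :=
  ∑ k ∈ Finset.range (s.totalDegree + 1), X i ^ (s.totalDegree - k) * homogeneousComponent k s

theorem isHomogeneous_homogenizeAt (i : σ) (s : MvPolynomial σ R) :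
    (homogenizeAt i s).IsHomogeneous s.totalDegree := by
  refine IsHomogeneous.sum _ _ _ fun k hk => ?_
  have hk : k ≤ s.totalDegree := Nat.lt_succ_iff.mp (Finset.mem_range.mp hk)
  simpa [Nat.sub_add_cancel hk] using
    ((isHomogeneous_X_pow i (s.totalDegree - k)).mul (homogeneousComponent_isHomogeneous k s))

theorem eval_homogenizeAt {i : σ} {v : σ → R} (hv : v i = 1) (s : MvPolynomial σ R) :
    eval v (homogenizeAt i s) = eval v s := by
  conv_rhs => rw [← sum_homogeneousComponent s]
  simp [homogenizeAt, hv]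

end MvPolynomial

namespace PaperSC

open MvPolynomial

variable {n : ℕ}

theorem vanishAt_mk_iff {f : Poly n} {k : ℕ} (hf : f.IsHomogeneous k) {v : Fin n → ℂ}
    (hv : v ≠ 0) : VanishAt f (Projectivization.mk ℂ v hv) ↔ eval v f = 0 := by
  refine ⟨fun h => h v hv rfl, fun h w hw hwv => ?_⟩
  obtain ⟨c, rfl⟩ := (Projectivization.mk_eq_mk_iff' ℂ _ _ hw hv).mp hwv
  rw [IsHomogeneous.eval_smul hf, h, mul_zero]

theorem vanishAt_iff_eval_rep {f : Poly n} {k : ℕ} (hf : f.IsHomogeneous k) (x : Pr n) :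
    VanishAt f x ↔ eval x.rep f = 0 := by
  conv_lhs => rw [← x.mk_rep]
  exact vanishAt_mk_iff hf _

theorem isAlgSet_zeroLocus_singleton {f : Poly n} {k : ℕ} (hf : f.IsHomogeneous k) :
    IsAlgSet (zeroLocus {f}) :=
  ⟨{f}, fun _ h => ⟨k, (Set.mem_singleton_iff.mp h) ▸ hf⟩, rfl⟩

theorem mem_zeroLocus_singleton {f : Poly n} {x : Pr n} :
    x ∈ zeroLocus {f} ↔ VanishAt f x := by
  simp [zeroLocus]

theorem acoord_eq_smul (i : Fin n) (p : Pr n) : acoord i p = (p.rep i)⁻¹ • p.rep := by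
  ext j
  simp [acoord, div_eq_inv_mul]

theorem acoord_self {i : Fin n} {p : Pr n} (h : p.rep i ≠ 0) : acoord i p i = 1 :=
  div_self h

theorem acoord_ne_zero {i : Fin n} {p : Pr n} (h : p.rep i ≠ 0) : acoord i p ≠ 0 :=
  fun h0 => one_ne_zero ((acoord_self h).symm.trans (congrFun h0 i))

theorem mk_acoord {i : Fin n} {p : Pr n} (h : p.rep i ≠ 0) :
    Projectivization.mk ℂ (acoord i p) (acoord_ne_zero h) = p := by
  conv_rhs => rw [← p.mk_rep]
  simp only [acoord_eq_smul]
  exact (Projectivization.mk_eq_mk_iff' ℂ _ _ _ _).mpr ⟨(p.rep i)⁻¹, rfl⟩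

theorem subst1_X_self (i : Fin n) : subst1 i (X i : Poly n) = 1 := by
  simp [subst1]

theorem eval_subst1 {i : Fin n} {v : Fin n → ℂ} (hv : v i = 1) (f : Poly n) :
    eval v (subst1 i f) = eval v f := by
  have h : (aeval v).comp (subst1 i) = aeval v := algHom_ext fun j => by
    rcases eq_or_ne j i with rfl | hj <;> simp [subst1, *]
  simpa using AlgHom.congr_fun h f

theorem subst1_mem_affIdeal {X : Set (Pr n)} {f : Poly n} {d : ℕ} (hf : f ∈ homVan X d)
    (i : Fin n) : subst1 i f ∈ affIdeal i X :=
  Ideal.subset_span ⟨f, Set.mem_iUnion.mpr ⟨d, hf⟩, rfl⟩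

theorem eval_eq_zero_of_mem_affIdeal {X : Set (Pr n)} {i : Fin n} {x : Pr n} (hx : x ∈ X)
    (hxi : x.rep i ≠ 0) {h : Poly n} (hh : h ∈ affIdeal i X) : eval (acoord i x) h = 0 := by
  refine Submodule.span_induction ?_ (map_zero _) (fun _ _ _ _ ha hb => by simp [ha, hb])
    (fun a _ _ hb => by simp [hb]) hh
  rintro _ ⟨f, hf, rfl⟩
  obtain ⟨d, hfd⟩ := Set.mem_iUnion.mp hf
  rw [eval_subst1 (acoord_self hxi)]
  exact hfd.2 x hx _ _ (mk_acoord hxi)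

theorem forall_vanishAt_of_mul_mem_affIdeal {X : Set (Pr n)} (hX : IsSubvariety X)
    {p : Pr n} (hpX : p ∈ X) {i : Fin n} (hpi : p.rep i ≠ 0) {g : Poly n} {k : ℕ}
    (hg : g.IsHomogeneous k) {s : Poly n} (hs : MvPolynomial.eval (acoord i p) s ≠ 0)
    (hsg : s * subst1 i g ∈ affIdeal i X) : ∀ x ∈ X, VanishAt g x := by
  set H := MvPolynomial.X i * homogenizeAt i s
  have hH : H.IsHomogeneous (1 + s.totalDegree) :=
    (isHomogeneous_X ℂ i).mul (isHomogeneous_homogenizeAt i s)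
  -- off `V(x_i · s^h)` a point has an affine representative at which `s ≠ 0`
  have hcover : X ⊆ zeroLocus {g} ∪ zeroLocus {H} := by
    intro x hx
    by_cases hxH : VanishAt H x
    · exact Or.inr (mem_zeroLocus_singleton.mpr hxH)
    rw [vanishAt_iff_eval_rep hH, map_mul, eval_X, mul_eq_zero, not_or] at hxH
    obtain ⟨hxi, hxs⟩ := hxH
    have hsx : eval (acoord i x) s ≠ 0 := by
      rw [← eval_homogenizeAt (acoord_self hxi), acoord_eq_smul,
        (isHomogeneous_homogenizeAt i s).eval_smul]
      exact mul_ne_zero (pow_ne_zero _ (inv_ne_zero hxi)) hxs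
    have hsgx := eval_eq_zero_of_mem_affIdeal hx hxi hsg
    rw [map_mul, eval_subst1 (acoord_self hxi), mul_eq_zero] at hsgx
    rw [Set.mem_union, mem_zeroLocus_singleton, ← mk_acoord hxi, vanishAt_mk_iff hg]
    exact Or.inl (hsgx.resolve_left hsx)
  rcases hX.2.2 _ _ (isAlgSet_zeroLocus_singleton hg) (isAlgSet_zeroLocus_singleton hH)
    hcover with hXg | hXH
  · exact fun x hx => mem_zeroLocus_singleton.mp (hXg hx)
  · have hHp := mem_zeroLocus_singleton.mp (hXH hpX)
    rw [← mk_acoord hpi, vanishAt_mk_iff hH, map_mul, eval_X, acoord_self hpi, one_mul,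
      eval_homogenizeAt (acoord_self hpi)] at hHp
    exact absurd hHp hs

theorem mIdeal_le_ker_eval (a : Fin n → ℂ) : mIdeal a ≤ RingHom.ker (MvPolynomial.eval a) :=
  Ideal.span_le.mpr (Set.range_subset_iff.mpr fun j => by simp)

theorem forall_vanishAt_of_forall_mul_mem_pow_sup {X : Set (Pr n)} (hX : IsSubvariety X)
    {p : Pr n} (hpX : p ∈ X) {i : Fin n} (hpi : p.rep i ≠ 0) {g : Poly n} {k : ℕ}
    (hg : g.IsHomogeneous k)
    (h : ∀ m : ℕ, ∃ s, MvPolynomial.eval (acoord i p) s ≠ 0 ∧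
      s * subst1 i g ∈ mIdeal (acoord i p) ^ m ⊔ affIdeal i X) :
    ∀ x ∈ X, VanishAt g x := by
  have := RingHom.ker_isPrime (MvPolynomial.eval (acoord i p))
  obtain ⟨s, hs, hsg⟩ := Ideal.exists_notMem_mul_mem_of_forall_mul_mem_pow_sup
    (P := RingHom.ker (MvPolynomial.eval (acoord i p))) fun m => by
      obtain ⟨s, hs, hsg⟩ := h m
      exact ⟨s, hs, sup_le_sup_right (Ideal.pow_right_mono (mIdeal_le_ker_eval _) m) _ hsg⟩
  exact forall_vanishAt_of_mul_mem_affIdeal hX hpX hpi hg hs hsg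

theorem le_ordAt {X : Set (Pr n)} (hX : IsSubvariety X) {p : Pr n} (hpX : p ∈ X)
    {g : Poly n} {k : ℕ} (hg : g.IsHomogeneous k) (hgX : ¬ ∀ x ∈ X, VanishAt g x) {m : ℕ}
    (hm : ∃ (i : Fin n) (s : Poly n), p.rep i ≠ 0 ∧ MvPolynomial.eval (acoord i p) s ≠ 0 ∧
      s * subst1 i g ∈ mIdeal (acoord i p) ^ m ⊔ affIdeal i X) :
    m ≤ ordAt X p g := by
  refine le_csSup (Set.Finite.bddAbove ?_) hm
  let S (i : Fin n) : Set ℕ := {m | p.rep i ≠ 0 ∧ ∃ s, MvPolynomial.eval (acoord i p) s ≠ 0 ∧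
      s * subst1 i g ∈ mIdeal (acoord i p) ^ m ⊔ affIdeal i X}
  refine (Set.finite_iUnion (f := S) fun i => ?_).subset fun m ⟨i, s, hpi, hs, hsg⟩ =>
    Set.mem_iUnion.mpr ⟨i, hpi, s, hs, hsg⟩
  by_contra hinf
  obtain ⟨-, hpi, -⟩ := (Set.not_finite.mp hinf).nonempty
  refine hgX (forall_vanishAt_of_forall_mul_mem_pow_sup hX hpX hpi hg fun m => ?_)
  obtain ⟨m', ⟨-, s, hs, hsg⟩, hmm'⟩ := (Set.not_finite.mp hinf).exists_gt m
  exact ⟨s, hs,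
    sup_le_sup_right (Ideal.pow_le_pow_right (I := mIdeal (acoord i p)) hmm'.le) _ hsg⟩

variable {N : ℕ}

theorem pt0_rep_eq_smul (N : ℕ) : ∃ c : ℂˣ, c • e0vec N = (pt0 N).rep :=
  Projectivization.exists_smul_eq_mk_rep ℂ _ (e0vec_ne N)

theorem pt0_rep_zero_ne_zero (N : ℕ) : (pt0 N).rep 0 ≠ 0 := by
  obtain ⟨c, hc⟩ := pt0_rep_eq_smul N
  simp [← hc, e0vec, Units.smul_def]

theorem acoord_zero_pt0 (N : ℕ) : acoord 0 (pt0 N) = e0vec N := by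
  obtain ⟨c, hc⟩ := pt0_rep_eq_smul N
  rw [acoord_eq_smul, ← hc]
  ext j
  cases j using Fin.cases <;> simp [e0vec, Units.smul_def]

theorem map_emb_idealOfVars_le : (idealOfVars (Fin N) ℂ).map emb ≤ mIdeal (e0vec N) := by
  rw [Ideal.map_span, Ideal.span_le]
  rintro _ ⟨_, ⟨j, rfl⟩, rfl⟩
  exact Ideal.subset_span ⟨j.succ, by simp [emb, e0vec]⟩

theorem emb_mem_mIdeal_pow {f : Poly N} {k : ℕ} (hf : f.IsHomogeneous k) :
    emb f ∈ mIdeal (e0vec N) ^ k := by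
  have hfk : f ∈ idealOfVars (Fin N) ℂ ^ k := by
    rw [mem_pow_idealOfVars_iff]
    intro u hu
    rw [Finsupp.degree_eq_weight_one]
    exact (hf (mem_support_iff.mp hu)).ge
  have := Ideal.mem_map_of_mem emb hfk
  rw [Ideal.map_pow] at this
  exact Ideal.pow_right_mono map_emb_idealOfVars_le k this

theorem subst1_zero_emb (f : Poly N) : subst1 0 (emb f) = emb f := by
  have h : (subst1 0).comp emb = (emb : Poly N →ₐ[ℂ] Poly (N + 1)) :=
    algHom_ext fun j => by simp [subst1, emb, Fin.succ_ne_zero]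
  exact AlgHom.congr_fun h f

theorem isHomogeneous_sum_X_pow_mul_emb {F : ℕ → Poly N} (hF : ∀ k, (F k).IsHomogeneous k)
    {m : ℕ} {t : Finset ℕ} (ht : ∀ k ∈ t, k ≤ m) :
    (∑ k ∈ t, MvPolynomial.X 0 ^ (m - k) * emb (F k)).IsHomogeneous m :=
  IsHomogeneous.sum _ _ _ fun k hk => by
    simpa [emb, Nat.sub_add_cancel (ht k hk)] using
      (isHomogeneous_X_pow 0 (m - k)).mul (hF k).rename_isHomogeneous

theorem subst1_zero_sum_X_pow_mul_emb (F : ℕ → Poly N) (m : ℕ) (t : Finset ℕ) :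
    subst1 0 (∑ k ∈ t, MvPolynomial.X 0 ^ (m - k) * emb (F k)) = ∑ k ∈ t, emb (F k) := by
  simp only [map_sum, map_mul, map_pow, subst1_X_self, one_pow, one_mul, subst1_zero_emb]

theorem ord_of_partial_sum_divisor_general
    (N : ℕ) (X : Set (Pr (N + 1)))
    (hX : IsSubvariety X) (hp : pt0 N ∈ X)
    (d : ℕ)
    (fI : ℕ → Poly N) (hfI : ∀ i, (fI i).IsHomogeneous i)
    (hf : (∑ i ∈ Finset.Icc 1 d, MvPolynomial.X 0 ^ (d - i) * emb (fI i)) ∈ homVan X d)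
    (i : ℕ) (hid : i ≤ d - 1)
    (g : Poly (N + 1))
    (hg : g = ∑ k ∈ Finset.Icc 1 i, MvPolynomial.X 0 ^ (i - k) * emb (fI k))
    (hnc : ¬ ∀ x ∈ X, VanishAt g x) :
    i + 1 ≤ ordAt X (pt0 N) g := by
  have hgi : g.IsHomogeneous i :=
    hg ▸ isHomogeneous_sum_X_pow_mul_emb hfI fun k hk => (Finset.mem_Icc.mp hk).2
  refine le_ordAt hX hp hgi hnc ⟨0, 1, pt0_rep_zero_ne_zero N, by simp, ?_⟩
  have hsplit : subst1 0 g =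
      subst1 0 (∑ k ∈ Finset.Icc 1 d, MvPolynomial.X 0 ^ (d - k) * emb (fI k)) -
        ∑ k ∈ Finset.Ioc i d, emb (fI k) := by
    have hIcc (m : ℕ) : Finset.Icc 1 m = Finset.Ioc 0 m := Finset.Icc_add_one_left_eq_Ioc 0 m
    rw [hg, subst1_zero_sum_X_pow_mul_emb, subst1_zero_sum_X_pow_mul_emb, hIcc, hIcc,
      ← Finset.sum_Ioc_consecutive _ i.zero_le (by omega : i ≤ d), add_sub_cancel_right]
  rw [acoord_zero_pt0, one_mul, hsplit]
  refine sub_mem (Submodule.mem_sup_right (subst1_mem_affIdeal hf 0))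
    (Submodule.mem_sup_left (Ideal.sum_mem _ fun k hk => ?_))
  exact Ideal.pow_le_pow_right (Finset.mem_Ioc.mp hk).1 (emb_mem_mIdeal_pow (hfI k))

/-- order of vanishing of the truncated divisors.
Let `X ⊆ ℙ^N` contain `p = [1:0:⋯:0]`, let `d = d_p(X)` and let
`f = Σ_{i=1}^d x_0^{d-i} f^i ∈ H^0(ℙ^N, I_X ⊗ O(d))` with `f^i ∈ ℂ[x_1,…,x_N]`
homogeneous of degree `i`.  For `1 ≤ i ≤ d-1`, if the hypersurface
`D^i = (x_0^{i-1} f^1 + ⋯ + x_0 f^{i-1} + f^i = 0)` does not contain `X`, then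
the effective divisor `D^i|_X ∈ |O_X(i)|` satisfies `ord_p(D^i|_X) ≥ i + 1`. -/
theorem ord_of_partial_sum_divisor
    (N : ℕ) (X : Set (Pr (N + 1)))
    (hX : IsSubvariety X) (hp : pt0 N ∈ X)
    (d : ℕ) (hd : d = dP X (pt0 N))
    (fI : ℕ → Poly N) (hfI : ∀ i, (fI i).IsHomogeneous i)
    (hf : (∑ i ∈ Finset.Icc 1 d, MvPolynomial.X 0 ^ (d - i) * emb (fI i)) ∈ homVan X d)
    (i : ℕ) (hi1 : 1 ≤ i) (hid : i ≤ d - 1)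
    (g : Poly (N + 1))
    (hg : g = ∑ k ∈ Finset.Icc 1 i, MvPolynomial.X 0 ^ (i - k) * emb (fI k))
    (hnc : ¬ ∀ x ∈ X, VanishAt g x) :
    i + 1 ≤ ordAt X (pt0 N) g :=
  ord_of_partial_sum_divisor_general N X hX hp d fI hfI hf i hid g hg hnc

end PaperSC
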